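/- Let n ≥ 1, N ≥ 1, and let M = (M_{ij}) be a real N×N matrix all of whose entries are nonnegative. If f belongs to the cone 𝓔_G, then the function (x_1,…,x_N) ↦ f(y_1,…,y_N), where y_i = Σ_{j=1}^N M_{ij} x_j ∈ ℝ^n, again belongs to 𝓔_G. (In particular, precomposition with e^{−tF} for ferromagnetic F preserves the cone 𝓔_G.) -/

import Mathlib

open MeasureTheory RealInnerProductSpace Real

/-- The cone `𝓔_G` of finite linear combinations with nonnegative coefficients of
monomials `∏_{1 ≤ i ≤ j ≤ N} (x_i · x_j)^{n_{ij}}`, for variables `x_1,…,x_N ∈ ℝ^n`. -/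
def InConeG (n N : ℕ) (f : (Fin N → EuclideanSpace ℝ (Fin n)) → ℝ) : Prop :=
  ∃ (K : ℕ) (c : Fin K → ℝ) (e : Fin K → Fin N → Fin N → ℕ),
    (∀ k, 0 ≤ c k) ∧
    ∀ x, f x = ∑ k, c k *
      ∏ p ∈ Finset.univ.filter (fun p : Fin N × Fin N => p.1 ≤ p.2),
        (⟪x p.1, x p.2⟫ : ℝ) ^ e k p.1 p.2

/-!
Membership in `𝓔_G` is closed under sums, products and multiplication by nonnegative constants,
i.e. `𝓔_G` is a subsemiring of the real functions of `(x_1, …, x_N)`, and it contains every Gram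
entry `x_i · x_j`. Expanding `y_i · y_j = ∑_{a,b} M_{ia} M_{jb} (x_a · x_b)` with `M ≥ 0` shows
that the Gram entries of `y = M x` lie in `𝓔_G`; substituting them into the monomials of `f`
stays inside the subsemiring.
-/

open Finset

namespace InConeG

variable {n N : ℕ}

theorem of_fintype {ι : Type*} [Fintype ι] {f : (Fin N → EuclideanSpace ℝ (Fin n)) → ℝ}
    (c : ι → ℝ) (e : ι → Fin N → Fin N → ℕ) (hc : ∀ k, 0 ≤ c k)
    (hf : ∀ x, f x = ∑ k, c k *
      ∏ p ∈ univ.filter (fun p : Fin N × Fin N => p.1 ≤ p.2), ⟪x p.1, x p.2⟫ ^ e k p.1 p.2) :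
    InConeG n N f := by
  let σ := Fintype.equivFin ι
  refine ⟨Fintype.card ι, c ∘ σ.symm, e ∘ σ.symm, fun k => hc _, fun x => ?_⟩
  rw [hf x]
  exact Fintype.sum_equiv σ _ _ fun k => by simp

theorem const {a : ℝ} (ha : 0 ≤ a) : InConeG n N fun _ => a :=
  of_fintype (ι := Unit) (fun _ => a) (fun _ _ _ => 0) (fun _ => ha) (by simp)

theorem zero : InConeG n N fun _ => 0 :=
  const le_rfl

theorem add {f g : (Fin N → EuclideanSpace ℝ (Fin n)) → ℝ} (hf : InConeG n N f)
    (hg : InConeG n N g) : InConeG n N (f + g) := by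
  obtain ⟨K, c, e, hc, hf⟩ := hf
  obtain ⟨L, d, e', hd, hg⟩ := hg
  refine of_fintype (Sum.elim c d) (Sum.elim e e') (fun k => by cases k <;> simp [hc, hd])
    fun x => ?_
  simp [Fintype.sum_sum_type, hf x, hg x]

theorem mul {f g : (Fin N → EuclideanSpace ℝ (Fin n)) → ℝ} (hf : InConeG n N f)
    (hg : InConeG n N g) : InConeG n N (f * g) := by
  obtain ⟨K, c, e, hc, hf⟩ := hf
  obtain ⟨L, d, e', hd, hg⟩ := hg
  refine of_fintype (fun k : Fin K × Fin L => c k.1 * d k.2)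
    (fun k i j => e k.1 i j + e' k.2 i j) (fun k => mul_nonneg (hc k.1) (hd k.2)) fun x => ?_
  rw [Pi.mul_apply, hf x, hg x, sum_mul_sum, Fintype.sum_prod_type]
  refine sum_congr rfl fun k _ => sum_congr rfl fun l _ => ?_
  simp only [pow_add, prod_mul_distrib]
  ring

end InConeG

def coneG (n N : ℕ) : Subsemiring ((Fin N → EuclideanSpace ℝ (Fin n)) → ℝ) where
  carrier := {f | InConeG n N f}
  zero_mem' := InConeG.zero
  one_mem' := InConeG.const zero_le_one
  add_mem' := InConeG.add
  mul_mem' := InConeG.mul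

namespace InConeG

variable {n N : ℕ}

theorem inner_of_le {i j : Fin N} (hij : i ≤ j) :
    InConeG n N fun x => ⟪x i, x j⟫ := by
  classical
  refine of_fintype (ι := Unit) (fun _ => 1) (fun _ a b => if a = i ∧ b = j then 1 else 0)
    (fun _ => zero_le_one) fun x => ?_
  rw [Fintype.sum_unique, one_mul, prod_eq_single_of_mem (i, j) (by simpa using hij)]
  · simp
  · rintro p - hp
    rw [if_neg fun h => hp (Prod.ext h.1 h.2), pow_zero]

theorem inner (i j : Fin N) : InConeG n N fun x => ⟪x i, x j⟫ := by
  rcases le_total i j with hij | hji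
  · exact inner_of_le hij
  · simpa only [real_inner_comm] using inner_of_le (n := n) hji

theorem inner_sum_smul {a b : Fin N → ℝ} (ha : 0 ≤ a) (hb : 0 ≤ b) :
    InConeG n N fun x => ⟪∑ k, a k • x k, ∑ l, b l • x l⟫ := by
  have expand : (fun x : Fin N → EuclideanSpace ℝ (Fin n) => ⟪∑ k, a k • x k, ∑ l, b l • x l⟫)
      = ∑ k, ∑ l, (fun _ => a k * b l) * fun x => ⟪x k, x l⟫ := by
    ext x
    simp only [sum_inner, inner_sum, real_inner_smul_left, real_inner_smul_right,
      Finset.sum_apply, Pi.mul_apply]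
    rw [sum_comm]
    simp only [mul_left_comm (b _), mul_assoc]
  rw [expand]
  exact sum_mem fun k _ => sum_mem fun l _ =>
    (coneG n N).mul_mem (const (mul_nonneg (ha k) (hb l))) (inner k l)

theorem comp {n' N' : ℕ} {f : (Fin N → EuclideanSpace ℝ (Fin n)) → ℝ} (hf : InConeG n N f)
    (y : (Fin N' → EuclideanSpace ℝ (Fin n')) → Fin N → EuclideanSpace ℝ (Fin n))
    (hy : ∀ i j, InConeG n' N' fun x => ⟪y x i, y x j⟫) :
    InConeG n' N' (f ∘ y) := by
  obtain ⟨K, c, e, hc, hf⟩ := hf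
  have expand : f ∘ y = ∑ k, (fun _ => c k) *
      ∏ p ∈ univ.filter (fun p : Fin N × Fin N => p.1 ≤ p.2),
        (fun x => ⟪y x p.1, y x p.2⟫) ^ e k p.1 p.2 := by
    ext x
    simp [hf]
  rw [expand]
  exact sum_mem fun k _ => (coneG n' N').mul_mem (const (hc k))
    (prod_mem fun p _ => pow_mem (hy p.1 p.2) _)

end InConeG

theorem nonneg_matrix_precomposition_preserves_coneG_general (n N : ℕ)
    (M : Matrix (Fin N) (Fin N) ℝ) (hM : ∀ i j, 0 ≤ M i j)
    (f : (Fin N → EuclideanSpace ℝ (Fin n)) → ℝ) (hf : InConeG n N f) :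
    InConeG n N (fun x => f (fun i => ∑ j, M i j • x j)) :=
  hf.comp _ fun i j => InConeG.inner_sum_smul (hM i) (hM j)

/-- If all entries of the matrix `M` are nonnegative and `f ∈ 𝓔_G`, then
`(x₁,…,x_N) ↦ f(y₁,…,y_N)` with `y_i = ∑_j M_{ij} x_j` again belongs to `𝓔_G`. -/
theorem nonneg_matrix_precomposition_preserves_coneG (n N : ℕ) (hn : 1 ≤ n) (hN : 1 ≤ N)
    (M : Matrix (Fin N) (Fin N) ℝ) (hM : ∀ i j, 0 ≤ M i j)
    (f : (Fin N → EuclideanSpace ℝ (Fin n)) → ℝ) (hf : InConeG n N f) :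
    InConeG n N (fun x => f (fun i => ∑ j, M i j • x j)) :=
  nonneg_matrix_precomposition_preserves_coneG_general n N M hM f hf
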